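/- If a compact invariant set Λ of a flow contains a sectionally contracting subspace E of dimension l+1 and a sectionally expanding subspace F of dimension d−l in the tangent space at a hyperbolic singularity σ, then the index of σ satisfies Ind(σ)−1 ≤ l ≤ Ind(σ). -/

import Mathlib

/-!
A plane lying in both a sectionally contracting and a sectionally expanding subspace would have
its area shrink and grow at the same exponential rate, so such subspaces meet in dimension at
most one. By the dimension formula, `E` (of dimension `l + 1`) and `E^u` (of dimension `d - s`)
then force `l ≤ s`, and `E^s` (of dimension `s`) and `F` (of dimension `d - l`) force
`s ≤ l + 1`.
-/

open scoped RealInnerProductSpace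

/-- The (unsigned) area of the parallelogram spanned by `u` and `v`. -/
noncomputable def area {V : Type*} [NormedAddCommGroup V] [InnerProductSpace ℝ V]
    (u v : V) : ℝ :=
  Real.sqrt (‖u‖ ^ 2 * ‖v‖ ^ 2 - ⟪u, v⟫ ^ 2)

def SectionallyContracting {V : Type*} [NormedAddCommGroup V] [InnerProductSpace ℝ V]
    (Φ : ℝ → V →L[ℝ] V) (C η : ℝ) (S : Submodule ℝ V) : Prop :=
  (∀ t : ℝ, S.map (Φ t).toLinearMap ≤ S) ∧
  ∀ t : ℝ, 0 ≤ t → ∀ u ∈ S, ∀ v ∈ S,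
    area (Φ t u) (Φ t v) ≤ C * Real.exp (-η * t) * area u v

def SectionallyExpanding {V : Type*} [NormedAddCommGroup V] [InnerProductSpace ℝ V]
    (Φ : ℝ → V →L[ℝ] V) (C η : ℝ) (S : Submodule ℝ V) : Prop :=
  (∀ t : ℝ, S.map (Φ t).toLinearMap ≤ S) ∧
  ∀ t : ℝ, 0 ≤ t → ∀ u ∈ S, ∀ v ∈ S,
    C⁻¹ * Real.exp (η * t) * area u v ≤ area (Φ t u) (Φ t v)

open Module

section Area

variable {V : Type*} [NormedAddCommGroup V] [InnerProductSpace ℝ V]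

lemma area_nonneg (u v : V) : 0 ≤ area u v :=
  Real.sqrt_nonneg _

/-- The strict case of Cauchy–Schwarz. -/
lemma area_pos_of_linearIndependent {u v : V} (h : LinearIndependent ℝ ![u, v]) :
    0 < area u v := by
  have hu : u ≠ 0 := by simpa using h.ne_zero 0
  have hv : v ≠ 0 := by simpa using h.ne_zero 1
  have hnot_parallel : |⟪u, v⟫| ≠ ‖u‖ * ‖v‖ := fun heq ↦ by
    obtain ⟨r, -, rfl⟩ := (norm_inner_eq_norm_iff (𝕜 := ℝ) hu hv).mp heq
    exact (LinearIndependent.pair_iff' hu).mp h r rfl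
  have hcs : |⟪u, v⟫| < ‖u‖ * ‖v‖ := (abs_real_inner_le_norm u v).lt_of_ne hnot_parallel
  refine Real.sqrt_pos.mpr ?_
  nlinarith [abs_nonneg ⟪u, v⟫, sq_abs ⟪u, v⟫]

lemma area_eq_zero_of_sectionallyContracting_of_sectionallyExpanding
    {Φ : ℝ → V →L[ℝ] V} {C η : ℝ} (hC : 0 < C) (hη : 0 < η) {S T : Submodule ℝ V}
    (hS : SectionallyContracting Φ C η S) (hT : SectionallyExpanding Φ C η T)
    {u v : V} (hu : u ∈ S ⊓ T) (hv : v ∈ S ⊓ T) : area u v = 0 := by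
  set t := (|Real.log C| + 1) / η
  have ht : 0 ≤ t := by positivity
  set X := Real.exp (η * t)
  have hCX : C < X := by
    rw [← Real.exp_log hC]
    refine Real.exp_lt_exp.mpr ?_
    rw [mul_div_cancel₀ _ hη.ne']
    linarith [le_abs_self (Real.log C)]
  have hsandwich : C⁻¹ * X * area u v ≤ C * X⁻¹ * area u v := by
    have hcontract := hS.2 t ht u hu.1 v hv.1
    rw [neg_mul, Real.exp_neg] at hcontract
    exact (hT.2 t ht u hu.2 v hv.2).trans hcontract
  have hexpand : 1 < C⁻¹ * X := (one_lt_inv_mul₀ hC).mpr hCX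
  have hshrink : C * X⁻¹ < 1 := (mul_inv_lt_iff₀ (hC.trans hCX)).mpr (by rwa [one_mul])
  nlinarith [area_nonneg u v]

lemma finrank_inf_le_one_of_sectionallyContracting_of_sectionallyExpanding
    {Φ : ℝ → V →L[ℝ] V} {C η : ℝ} (hC : 0 < C) (hη : 0 < η) {S T : Submodule ℝ V}
    (hS : SectionallyContracting Φ C η S) (hT : SectionallyExpanding Φ C η T) :
    finrank ℝ ↥(S ⊓ T) ≤ 1 := by
  by_contra! htwo
  obtain ⟨f, hf⟩ := exists_linearIndependent_of_le_finrank (R := ℝ) (n := 2) htwo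
  have hpair : LinearIndependent ℝ ![(f 0 : V), f 1] := by
    have hcoe : (S ⊓ T).subtype ∘ f = ![(f 0 : V), f 1] := by
      ext i
      fin_cases i <;> rfl
    simpa only [hcoe] using hf.map' (S ⊓ T).subtype (Submodule.ker_subtype _)
  exact (area_pos_of_linearIndependent hpair).ne'
    (area_eq_zero_of_sectionallyContracting_of_sectionallyExpanding hC hη hS hT (f 0).2 (f 1).2)

end Area

lemma Submodule.finrank_add_finrank_le_finrank_add_finrank_inf {K V : Type*} [DivisionRing K]
    [AddCommGroup V] [Module K V] [FiniteDimensional K V] (s t : Submodule K V) :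
    finrank K s + finrank K t ≤ finrank K V + finrank K ↥(s ⊓ t) := by
  rw [← Submodule.finrank_sup_add_finrank_inf_eq]
  gcongr
  exact Submodule.finrank_le _

theorem index_estimate_general {V : Type*} [NormedAddCommGroup V]
    [InnerProductSpace ℝ V] [FiniteDimensional ℝ V]
    (Φ : ℝ → V →L[ℝ] V)
    (C η : ℝ) (hC : 1 ≤ C) (hη : 0 < η)
    (Es Eu E F : Submodule ℝ V) (d s l : ℕ)
    (hd : Module.finrank ℝ V = d)
    (hEs : SectionallyContracting Φ C η Es) (hEu : SectionallyExpanding Φ C η Eu)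
    (hds : Module.finrank ℝ ↥Es = s) (hdu : Module.finrank ℝ ↥Eu = d - s)
    (hE : SectionallyContracting Φ C η E) (hF : SectionallyExpanding Φ C η F)
    (hdE : Module.finrank ℝ ↥E = l + 1) (hdF : Module.finrank ℝ ↥F = d - l) :
    s ≤ l + 1 ∧ l ≤ s := by
  have hC₀ : 0 < C := one_pos.trans_le hC
  have hEEu := finrank_inf_le_one_of_sectionallyContracting_of_sectionallyExpanding hC₀ hη hE hEu
  have hEsF := finrank_inf_le_one_of_sectionallyContracting_of_sectionallyExpanding hC₀ hη hEs hF
  have hdimEEu := Submodule.finrank_add_finrank_le_finrank_add_finrank_inf E Eu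
  have hdimEsF := Submodule.finrank_add_finrank_le_finrank_add_finrank_inf Es F
  omega

/-- If the tangent space at a hyperbolic singularity (with hyperbolic splitting
`E^s ⊕ E^u`, `dim E^s = Ind(σ) = s`, `E^s` sectionally contracting and `E^u` sectionally
expanding) contains a sectionally contracting subspace `E` of dimension `l+1` and a
sectionally expanding subspace `F` of dimension `d−l`, then `Ind(σ) − 1 ≤ l ≤ Ind(σ)`. -/
theorem index_estimate {V : Type*} [NormedAddCommGroup V]
    [InnerProductSpace ℝ V] [FiniteDimensional ℝ V]
    (Φ : ℝ → V →L[ℝ] V)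
    (hΦ0 : Φ 0 = ContinuousLinearMap.id ℝ V)
    (hΦadd : ∀ t s : ℝ, Φ (t + s) = (Φ t).comp (Φ s))
    (C η : ℝ) (hC : 1 ≤ C) (hη : 0 < η)
    (Es Eu E F : Submodule ℝ V) (d s l : ℕ)
    (hd : Module.finrank ℝ V = d)
    (hEs : SectionallyContracting Φ C η Es) (hEu : SectionallyExpanding Φ C η Eu)
    (hinf : Es ⊓ Eu = ⊥) (hsup : Es ⊔ Eu = ⊤)
    (hds : Module.finrank ℝ ↥Es = s) (hdu : Module.finrank ℝ ↥Eu = d - s) (hsd : s ≤ d)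
    (hE : SectionallyContracting Φ C η E) (hF : SectionallyExpanding Φ C η F)
    (hdE : Module.finrank ℝ ↥E = l + 1) (hdF : Module.finrank ℝ ↥F = d - l)
    (hld : l ≤ d) :
    s ≤ l + 1 ∧ l ≤ s :=
  index_estimate_general Φ C η hC hη Es Eu E F d s l hd hEs hEu hds hdu hE hF hdE hdF
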